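/- (Proposition 5.5(1)) Under the hypotheses of the hyperelliptic u_g-flow with the two branch indices a = 1, 2 and ψ_1 ≠ ψ_2 on U, one has 𝔇 = 𝔞^2 + ∂_s 𝔞 on U. -/

import Mathlib

open Finset

noncomputable def alFd (g : ℕ) (x : Fin g → ℂ → ℂ) (i : Fin g) (p : ℂ) : ℂ :=
  ∏ j ∈ Finset.univ.erase i, (x i p - x j p)

noncomputable def alPsi (g : ℕ) (x y : Fin g → ℂ → ℂ) (ba : ℂ) (p : ℂ) : ℂ :=
  ∑ i : Fin g, y i p / (alFd g x i p * (x i p - ba))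

noncomputable def frakA (g : ℕ) (x y : Fin g → ℂ → ℂ) (b1 b2 : ℂ) (p : ℂ) : ℂ :=
  (b2 - b1) / (alPsi g x y b2 p - alPsi g x y b1 p)

noncomputable def frakD (g : ℕ) (x y : Fin g → ℂ → ℂ) (b1 b2 : ℂ) (p : ℂ) : ℂ :=
  (b2 - b1) * (alPsi g x y b1 p + alPsi g x y b2 p) / (alPsi g x y b2 p - alPsi g x y b1 p)

open Polynomial Lagrange Function Topology

/-!
Each `ψ_a` solves the Riccati equation `∂_s ψ_a = b_a + 2 ∑ x_i + λ_{2g} - ψ_a²`, whose constant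
term depends on the branch point only through `b_a`; the quotient rule then turns the two Riccati
equations for `ψ_1, ψ_2` into `𝔇 = 𝔞² + ∂_s 𝔞`.

For the Riccati equation, differentiate `ψ_a` termwise, using `∂_s y_i = f'(x_i) / F'(x_i)` (from
`y_i² = f(x_i)`) and the logarithmic derivative of `F'(x_i)`. After expanding `ψ_a²` the cross terms
cancel in pairs, and what is left is the sum of the residues at the `x_i` of `h / F²`, where
`h = f / (X - b_a)` is monic of degree `2g`. That sum is the coefficient of `X⁻¹` in the expansion of
`h / F²` at infinity, i.e. `b_a + 2 ∑ x_i + λ_{2g}`; algebraically this is read off from the Hermite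
interpolant of `h - F²` at the double nodes `x_i`.
-/

section Residues

variable {K ι : Type*} [Field K]

theorem eval_derivative_nodal_eq_mul_sum [DecidableEq ι] {s : Finset ι} {v : ι → K} {z : K}
    (hz : ∀ i ∈ s, z ≠ v i) :
    (nodal s v).derivative.eval z = (nodal s v).eval z * ∑ i ∈ s, (z - v i)⁻¹ := by
  rw [derivative_nodal, eval_finsetSum, mul_sum]
  refine sum_congr rfl fun i hi => ?_
  rw [nodal_eq_mul_nodal_erase hi, eval_mul, eval_sub, eval_X, eval_C, mul_comm (z - v i),
    mul_inv_cancel_right₀ (sub_ne_zero.mpr (hz i hi))]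

theorem eq_zero_of_natDegree_lt_of_isRoot_derivative [Fintype ι] {ξ : ι → K} (hξ : Injective ξ)
    {P : K[X]} (hP : P.natDegree < 2 * Fintype.card ι)
    (h0 : ∀ i, P.IsRoot (ξ i)) (h1 : ∀ i, P.derivative.IsRoot (ξ i)) : P = 0 := by
  by_contra hne
  have hdvd : nodal univ ξ ^ 2 ∣ P := by
    rw [nodal, ← prod_pow]
    refine prod_dvd_of_coprime
      (fun i _ j _ hij => (pairwise_coprime_X_sub_C hξ hij).pow) fun i _ => ?_
    exact (le_rootMultiplicity_iff hne).mp
      ((one_lt_rootMultiplicity_iff_isRoot hne).mpr ⟨h0 i, h1 i⟩)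
  have := natDegree_le_of_dvd hdvd hne
  rw [natDegree_pow, natDegree_nodal, card_univ] at this
  omega

variable [Fintype ι] [DecidableEq ι]

theorem natDegree_le_and_coeff_linear_mul_nodal_erase_sq (ξ : ι → K) (i : ι) (A B : K) :
    ((C A * (X - C (ξ i)) + C B) * nodal (univ.erase i) ξ ^ 2).natDegree ≤
        2 * Fintype.card ι - 1 ∧
      ((C A * (X - C (ξ i)) + C B) * nodal (univ.erase i) ξ ^ 2).coeff
        (2 * Fintype.card ι - 1) = A := by
  have hlin : (C A * (X - C (ξ i)) + C B).natDegree ≤ 1 := by compute_degree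
  have hsq : (nodal (univ.erase i) ξ ^ 2).natDegree = 2 * (Fintype.card ι - 1) := by
    rw [natDegree_pow, natDegree_nodal, card_erase_of_mem (mem_univ i), card_univ]
  have hn : 2 * Fintype.card ι - 1 = 1 + 2 * (Fintype.card ι - 1) := by
    have := Fintype.card_pos_iff.mpr ⟨i⟩
    omega
  rw [hn]
  refine ⟨natDegree_mul_le_of_le hlin hsq.le, ?_⟩
  rw [coeff_mul_add_eq_of_natDegree_le hlin hsq.le, ← hsq, ((nodal_monic).pow 2).coeff_natDegree]
  simp

/-- The derivative at `ξ i` of `Q / G ^ 2`, where `G = nodal (univ.erase i) ξ`. -/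
noncomputable def residueDivNodalSq (ξ : ι → K) (Q : K[X]) (i : ι) : K :=
  (Q.derivative.eval (ξ i) * (nodal (univ.erase i) ξ).eval (ξ i) -
      2 * Q.eval (ξ i) * (nodal (univ.erase i) ξ).derivative.eval (ξ i)) /
    (nodal (univ.erase i) ξ).eval (ξ i) ^ 3

theorem eval_nodal_erase_ne_zero {ξ : ι → K} (hξ : Injective ξ) (i : ι) :
    (nodal (univ.erase i) ξ).eval (ξ i) ≠ 0 :=
  eval_nodal_not_at_node fun _ hj h => (mem_erase.mp hj).1 (hξ h).symm

theorem sum_residueDivNodalSq_eq_coeff {ξ : ι → K} (hξ : Injective ξ) {Q : K[X]}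
    (hQ : Q.natDegree < 2 * Fintype.card ι) :
    ∑ i, residueDivNodalSq ξ Q i = Q.coeff (2 * Fintype.card ι - 1) := by
  set G : ι → K[X] := fun i => nodal (univ.erase i) ξ
  set A : ι → K := residueDivNodalSq ξ Q
  set B : ι → K := fun i => Q.eval (ξ i) / (G i).eval (ξ i) ^ 2
  -- the Hermite interpolant of `Q` at the double nodes `ξ i`
  set H : K[X] := ∑ i, (C (A i) * (X - C (ξ i)) + C (B i)) * G i ^ 2
  have hG : ∀ {i m}, m ≠ i → (G i).IsRoot (ξ m) := fun hmi =>
    eval_nodal_at_node (mem_erase.mpr ⟨hmi, mem_univ _⟩)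
  have hHeval : ∀ m, H.eval (ξ m) = Q.eval (ξ m) := by
    intro m
    rw [eval_finsetSum, sum_eq_single m (fun i _ hi => by simp [(hG hi.symm).eq_zero])
      (by simp)]
    simp [B, G, eval_nodal_erase_ne_zero hξ]
  have hHderiv : ∀ m, H.derivative.eval (ξ m) = Q.derivative.eval (ξ m) := by
    intro m
    rw [derivative_sum, eval_finsetSum, sum_eq_single m
      (fun i _ hi => by simp [derivative_mul, derivative_pow, (hG hi.symm).eq_zero]) (by simp)]
    have := eval_nodal_erase_ne_zero hξ m
    simp only [derivative_mul, derivative_pow, derivative_add, derivative_C, derivative_X,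
      derivative_sub, eval_add, eval_mul, eval_pow, eval_sub, eval_X, eval_C, eval_zero, eval_one,
      A, B, G, residueDivNodalSq]
    field_simp
    ring
  have hQH : Q = H := by
    refine sub_eq_zero.mp (eq_zero_of_natDegree_lt_of_isRoot_derivative hξ ?_
      (fun m => by simp [hHeval]) (fun m => by simp [hHderiv]))
    refine (natDegree_sub_le _ _).trans_lt (max_lt hQ ?_)
    refine (natDegree_sum_le_of_forall_le _ _ fun i _ =>
      (natDegree_le_and_coeff_linear_mul_nodal_erase_sq ξ i (A i) (B i)).1).trans_lt ?_
    have := hQ.trans_le' (Nat.zero_le _)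
    omega
  conv_rhs => rw [hQH, finsetSum_coeff]
  exact sum_congr rfl fun i _ => (natDegree_le_and_coeff_linear_mul_nodal_erase_sq ξ i (A i) (B i)).2.symm

theorem residueDivNodalSq_sub_nodal_sq (ξ : ι → K) (Q : K[X]) (i : ι) :
    residueDivNodalSq ξ (Q - nodal univ ξ ^ 2) i = residueDivNodalSq ξ Q i := by
  simp [residueDivNodalSq, derivative_pow, eval_nodal_at_node (mem_univ i)]

theorem sum_residueDivNodalSq_eq_nextCoeff {ξ : ι → K} (hξ : Injective ξ)
    {h : K[X]} (hh : h.IsMonicOfDegree (2 * Fintype.card ι)) :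
    ∑ i, residueDivNodalSq ξ h i = h.nextCoeff + 2 * ∑ i, ξ i := by
  obtain hι | hι := isEmpty_or_nonempty ι
  · have h1 : h = 1 := isMonicOfDegree_zero_iff.mp (by simpa using hh)
    rw [h1, ← C_1, nextCoeff_C_eq_zero]
    simp
  have hn : 2 * Fintype.card ι ≠ 0 := by positivity
  have hU : (nodal univ ξ ^ 2).IsMonicOfDegree (2 * Fintype.card ι) := by
    rw [mul_comm]
    exact IsMonicOfDegree.pow ⟨by simp [natDegree_nodal], nodal_monic⟩ 2
  have hcoeff : ∀ {p : K[X]}, p.IsMonicOfDegree (2 * Fintype.card ι) →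
      p.coeff (2 * Fintype.card ι - 1) = p.nextCoeff := fun hp => by
    rw [nextCoeff_of_natDegree_pos (by rw [hp.natDegree_eq]; omega), hp.natDegree_eq]
  simp_rw [← residueDivNodalSq_sub_nodal_sq ξ h]
  rw [sum_residueDivNodalSq_eq_coeff hξ (hh.natDegree_sub_lt hn hU), coeff_sub, hcoeff hh,
    hcoeff hU, nodal_monic.nextCoeff_pow, nodal, prod_X_sub_C_nextCoeff]
  simp only [nsmul_eq_mul]
  push_cast
  ring

end Residues

theorem Finset.sum_sum_erase_eq_zero_of_antisymm {ι M : Type*} [DecidableEq ι] [AddCommGroup M]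
    (s : Finset ι) {c : ι → ι → M} (hc : ∀ i k, c k i = -c i k) :
    ∑ i ∈ s, ∑ k ∈ s.erase i, c i k = 0 := by
  rw [sum_sigma']
  refine sum_involution (fun x _ => ⟨x.2, x.1⟩) (fun x _ => by simp [hc x.1 x.2])
    (fun x hx _ h => (mem_erase.mp (mem_sigma.mp hx).2).1 (congrArg Sigma.fst h))
    (fun x hx => ?_) (fun _ _ => rfl)
  obtain ⟨hi, hk⟩ := mem_sigma.mp hx
  exact mem_sigma.mpr ⟨(mem_erase.mp hk).2, mem_erase.mpr ⟨(mem_erase.mp hk).1.symm, hi⟩⟩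

section Riccati

variable {K ι κ : Type*} [Field K] [Fintype ι] [DecidableEq ι] [Fintype κ] [DecidableEq κ]

/-- The paper's `F'(x_i)`, for `F = ∏ k, (X - x_k)`. -/
def lagrangeDenom (ξ : ι → K) (i : ι) : K :=
  ∏ k ∈ univ.erase i, (ξ i - ξ k)

/-- The velocity `∂_s x_i = 2 y_i / F'(x_i)` of the `u_g`-flow. -/
def flowVelocity (ξ η : ι → K) (i : ι) : K :=
  2 * η i / lagrangeDenom ξ i

theorem lagrangeDenom_eq_eval_nodal (ξ : ι → K) (i : ι) :
    lagrangeDenom ξ i = (nodal (univ.erase i) ξ).eval (ξ i) := by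
  rw [eval_nodal, lagrangeDenom]

theorem lagrangeDenom_ne_zero {ξ : ι → K} (hξ : Injective ξ) (i : ι) : lagrangeDenom ξ i ≠ 0 :=
  lagrangeDenom_eq_eval_nodal ξ i ▸ eval_nodal_erase_ne_zero hξ i

theorem residueDivNodalSq_nodal_erase {ξ η : ι → K} {b : κ → K} (a : κ) (hξ : Injective ξ)
    (hη : ∀ i, η i ^ 2 = ∏ j, (ξ i - b j)) (hξb : ∀ i j, ξ i ≠ b j) (i : ι) :
    residueDivNodalSq ξ (nodal (univ.erase a) b) i =
      η i ^ 2 / (lagrangeDenom ξ i ^ 2 * (ξ i - b a)) *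
        (∑ j ∈ univ.erase a, (ξ i - b j)⁻¹ - 2 * ∑ k ∈ univ.erase i, (ξ i - ξ k)⁻¹) := by
  have hF := lagrangeDenom_ne_zero hξ i
  have hβ : ξ i - b a ≠ 0 := sub_ne_zero.mpr (hξb i a)
  rw [residueDivNodalSq, eval_derivative_nodal_eq_mul_sum fun j _ => hξb i j,
    eval_derivative_nodal_eq_mul_sum fun k hk => hξ.ne (mem_erase.mp hk).1.symm,
    ← lagrangeDenom_eq_eval_nodal, hη i, ← mul_prod_erase _ _ (mem_univ a), ← eval_nodal]
  field_simp

theorem riccati_identity {ξ η : ι → K} {b : κ → K} (a : κ) (hξ : Injective ξ)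
    (hκ : Fintype.card κ = 2 * Fintype.card ι + 1)
    (hη : ∀ i, η i ^ 2 = ∏ j, (ξ i - b j)) (hξb : ∀ i j, ξ i ≠ b j) :
    (∑ i, η i / (lagrangeDenom ξ i * (ξ i - b a))) ^ 2 +
      ∑ i, η i / (lagrangeDenom ξ i * (ξ i - b a)) *
        (η i / lagrangeDenom ξ i * ∑ j, (ξ i - b j)⁻¹ -
          ∑ k ∈ univ.erase i, (flowVelocity ξ η i - flowVelocity ξ η k) / (ξ i - ξ k) -
          flowVelocity ξ η i / (ξ i - b a)) =
      b a + (2 * ∑ i, ξ i - ∑ j, b j) := by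
  set v := flowVelocity ξ η
  set T : ι → K := fun i => η i / (lagrangeDenom ξ i * (ξ i - b a))
  have hF : ∀ i, lagrangeDenom ξ i ≠ 0 := lagrangeDenom_ne_zero hξ
  have hβ : ∀ i, ξ i - b a ≠ 0 := fun i => sub_ne_zero.mpr (hξb i a)
  set c : ι → ι → K := fun i k => T i * T k * (ξ i + ξ k - 2 * b a) / (ξ i - ξ k)
  have hc : ∀ i k, c k i = -c i k := fun i k => by
    simp only [c]
    rw [← neg_sub (ξ i), div_neg]
    ring
  -- the diagonal part of `ψ² + ψ'` is the residue at `ξ i`, the off-diagonal part is antisymmetric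
  have hterm : ∀ i, (∑ k, T i * T k) +
      T i * (η i / lagrangeDenom ξ i * ∑ j, (ξ i - b j)⁻¹ -
        ∑ k ∈ univ.erase i, (v i - v k) / (ξ i - ξ k) - v i / (ξ i - b a)) =
      residueDivNodalSq ξ (nodal (univ.erase a) b) i + ∑ k ∈ univ.erase i, c i k := by
    intro i
    have hcik : ∀ k ∈ univ.erase i, c i k = T i * T k + T i * (v k / (ξ i - ξ k)) := by
      intro k hk
      have hik : ξ i - ξ k ≠ 0 := sub_ne_zero.mpr (hξ.ne (mem_erase.mp hk).1.symm)
      simp only [c, T, v, flowVelocity]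
      field_simp [hF i, hF k, hβ i, hβ k]
      ring
    rw [residueDivNodalSq_nodal_erase a hξ hη hξb, sum_congr rfl hcik, sum_add_distrib,
      ← mul_sum, ← add_sum_erase _ _ (mem_univ i), ← add_sum_erase _ _ (mem_univ a)]
    simp only [sub_div, sum_sub_distrib, div_eq_mul_inv (v i), ← mul_sum]
    simp only [T, v, flowVelocity]
    field_simp [hF i, hβ i]
    ring
  have hres : ∑ i, residueDivNodalSq ξ (nodal (univ.erase a) b) i =
      b a + (2 * ∑ i, ξ i - ∑ j, b j) := by
    rw [sum_residueDivNodalSq_eq_nextCoeff hξ ⟨by simp [natDegree_nodal, hκ], nodal_monic⟩,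
      nodal, prod_X_sub_C_nextCoeff, ← add_sum_erase univ b (mem_univ a)]
    ring
  rw [sq, sum_mul_sum, ← sum_add_distrib, sum_congr rfl fun i _ => hterm i, sum_add_distrib,
    sum_sum_erase_eq_zero_of_antisymm univ hc, add_zero, hres]

end Riccati

section Calculus

variable {𝕜 : Type*} [NontriviallyNormedField 𝕜]

theorem HasDerivAt.finsetProd_of_ne_zero {ι : Type*} [DecidableEq ι] {s : Finset ι}
    {f : ι → 𝕜 → 𝕜} {f' : ι → 𝕜} {x : 𝕜} (hf : ∀ i ∈ s, HasDerivAt (f i) (f' i) x)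
    (h0 : ∀ i ∈ s, f i x ≠ 0) :
    HasDerivAt (fun t => ∏ i ∈ s, f i t) ((∏ i ∈ s, f i x) * ∑ i ∈ s, f' i / f i x) x := by
  have hprod := HasDerivAt.fun_finsetProd hf
  simp only [smul_eq_mul] at hprod
  refine hprod.congr_deriv ?_
  rw [mul_sum]
  refine sum_congr rfl fun i hi => ?_
  rw [← mul_prod_erase s (f · x) hi]
  field_simp [h0 i hi]

theorem hasDerivAt_of_sq_eventuallyEq [CharZero 𝕜] {y h : 𝕜 → 𝕜} {h' x : 𝕜}
    (hy : DifferentiableAt 𝕜 y x) (hsq : (fun t => y t ^ 2) =ᶠ[𝓝 x] h) (hh : HasDerivAt h h' x)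
    (hy0 : y x ≠ 0) : HasDerivAt y (h' / (2 * y x)) x := by
  have hsq' : HasDerivAt (fun t => y t ^ 2) (2 * y x * deriv y x) x := by
    simpa [mul_comm] using hy.hasDerivAt.fun_pow 2
  rw [← hsq'.unique (hh.congr_of_eventuallyEq hsq),
    mul_div_cancel_left₀ _ (mul_ne_zero two_ne_zero hy0)]
  exact hy.hasDerivAt

theorem hasDerivAt_const_div_sub_of_riccati {φ₁ φ₂ : 𝕜 → 𝕜} {β₁ β₂ c x : 𝕜}
    (h₁ : HasDerivAt φ₁ (β₁ + c - φ₁ x ^ 2) x) (h₂ : HasDerivAt φ₂ (β₂ + c - φ₂ x ^ 2) x)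
    (hne : φ₁ x ≠ φ₂ x) :
    HasDerivAt (fun t => (β₂ - β₁) / (φ₂ t - φ₁ t))
      ((β₂ - β₁) * (φ₁ x + φ₂ x) / (φ₂ x - φ₁ x) - ((β₂ - β₁) / (φ₂ x - φ₁ x)) ^ 2) x := by
  have hne' : φ₂ x - φ₁ x ≠ 0 := sub_ne_zero.mpr hne.symm
  refine ((hasDerivAt_const x (β₂ - β₁)).fun_div (h₂.fun_sub h₁) hne').congr_deriv ?_
  field_simp
  ring

end Calculus

section Flow

variable {g : ℕ} {x y : Fin g → ℂ → ℂ} {κ : Type*} [Fintype κ] [DecidableEq κ] {b : κ → ℂ}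
  {p : ℂ}

theorem hasDerivAt_alPsi_riccati (hκ : Fintype.card κ = 2 * g + 1)
    (hx : ∀ i, HasDerivAt (x i) (flowVelocity (x · p) (y · p) i) p)
    (hy : ∀ i, DifferentiableAt ℂ (y i) p) (hdist : Injective (x · p))
    (hy2 : ∀ i, (fun t => y i t ^ 2) =ᶠ[𝓝 p] fun t => ∏ j, (x i t - b j))
    (hyne : ∀ i, y i p ≠ 0) (a : κ) :
    HasDerivAt (alPsi g x y (b a))
      (b a + (2 * ∑ i, x i p - ∑ j, b j) - alPsi g x y (b a) p ^ 2) p := by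
  have hη : ∀ i, y i p ^ 2 = ∏ j, (x i p - b j) := fun i => (hy2 i).eq_of_nhds
  have hxb : ∀ i j, x i p ≠ b j := fun i j h => hyne i <| pow_eq_zero_iff two_ne_zero |>.mp <|
    (hη i).trans (prod_eq_zero (mem_univ j) (sub_eq_zero.mpr h))
  have hF0 : ∀ i, alFd g x i p ≠ 0 := lagrangeDenom_ne_zero hdist
  set v := flowVelocity (x · p) (y · p)
  have hv : ∀ i, v i = 2 * y i p / alFd g x i p := fun _ => rfl
  have hF : ∀ i, HasDerivAt (alFd g x i)
      (alFd g x i p * ∑ k ∈ univ.erase i, (v i - v k) / (x i p - x k p)) p := fun i =>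
    HasDerivAt.finsetProd_of_ne_zero (fun k _ => (hx i).fun_sub (hx k))
      (fun k hk => sub_ne_zero.mpr (hdist.ne (mem_erase.mp hk).1.symm))
  have hY : ∀ i, HasDerivAt (y i) (y i p * (y i p / alFd g x i p * ∑ j, (x i p - b j)⁻¹)) p := by
    intro i
    refine (hasDerivAt_of_sq_eventuallyEq (hy i) (hy2 i)
      (HasDerivAt.finsetProd_of_ne_zero (fun j _ => (hx i).sub_const (b j))
        (fun j _ => sub_ne_zero.mpr (hxb i j))) (hyne i)).congr_deriv ?_
    rw [← hη i]
    simp only [hv, div_eq_mul_inv, ← mul_sum]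
    field_simp [hyne i, hF0 i]
  have hT : ∀ i ∈ univ, HasDerivAt (fun t => y i t / (alFd g x i t * (x i t - b a)))
      (y i p / (alFd g x i p * (x i p - b a)) * (y i p / alFd g x i p * ∑ j, (x i p - b j)⁻¹ -
        ∑ k ∈ univ.erase i, (v i - v k) / (x i p - x k p) - v i / (x i p - b a))) p := by
    intro i _
    have hβ : x i p - b a ≠ 0 := sub_ne_zero.mpr (hxb i a)
    refine ((hY i).fun_div ((hF i).fun_mul ((hx i).sub_const (b a)))
      (mul_ne_zero (hF0 i) hβ)).congr_deriv ?_
    simp only [hv]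
    field_simp [hF0 i]
    ring
  refine (HasDerivAt.fun_sum hT).congr_deriv ?_
  rw [eq_sub_iff_add_eq']
  exact riccati_identity a hdist (by simpa using hκ) hη hxb

end Flow

theorem stmt10_general
    (g : ℕ)
    (b : Fin (2 * g + 1) → ℂ)
    (U : Set ℂ) (hU : IsOpen U)
    (x y : Fin g → ℂ → ℂ)
    (hx : ∀ i, DifferentiableOn ℂ (x i) U)
    (hy : ∀ i, DifferentiableOn ℂ (y i) U)
    (hdist : ∀ p ∈ U, ∀ i j, i ≠ j → x i p ≠ x j p)
    (hy2 : ∀ p ∈ U, ∀ i, (y i p) ^ 2 = ∏ j, (x i p - b j))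
    (hyne : ∀ p ∈ U, ∀ i, y i p ≠ 0)
    (hflow : ∀ p ∈ U, ∀ i, deriv (x i) p = 2 * y i p / alFd g x i p)
    (hpsine : ∀ p ∈ U, alPsi g x y (b 0) p ≠ alPsi g x y (b 1) p)
 :
    ∀ p ∈ U,
      frakD g x y (b 0) (b 1) p
        = (frakA g x y (b 0) (b 1) p) ^ 2 + deriv (frakA g x y (b 0) (b 1)) p := by
  intro p hp
  have hUp : U ∈ 𝓝 p := hU.mem_nhds hp
  have hxp : ∀ i, HasDerivAt (x i) (2 * y i p / alFd g x i p) p := fun i =>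
    hflow p hp i ▸ ((hx i).differentiableAt hUp).hasDerivAt
  have hψ : ∀ a, HasDerivAt (alPsi g x y (b a))
      (b a + (2 * ∑ i, x i p - ∑ j, b j) - alPsi g x y (b a) p ^ 2) p :=
    hasDerivAt_alPsi_riccati (by simp) hxp (fun i => (hy i).differentiableAt hUp)
      (fun i j h => by_contra fun hij => hdist p hp i j hij h)
      (fun i => Filter.eventually_of_mem hUp fun t ht => hy2 t ht i)
      (hyne p hp)
  have hA : HasDerivAt (frakA g x y (b 0) (b 1)) _ p :=
    hasDerivAt_const_div_sub_of_riccati (hψ 0) (hψ 1) (hpsine p hp)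
  rw [hA.deriv, frakD, frakA]
  ring

theorem stmt10
    (g : ℕ) (hg : 1 ≤ g)
    (b : Fin (2 * g + 1) → ℂ) (hb : Function.Injective b)
    (U : Set ℂ) (hU : IsOpen U) (hUne : U.Nonempty)
    (x y : Fin g → ℂ → ℂ)
    (hx : ∀ i, DifferentiableOn ℂ (x i) U)
    (hy : ∀ i, DifferentiableOn ℂ (y i) U)
    (hdist : ∀ p ∈ U, ∀ i j, i ≠ j → x i p ≠ x j p)
    (hy2 : ∀ p ∈ U, ∀ i, (y i p) ^ 2 = ∏ j, (x i p - b j))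
    (hyne : ∀ p ∈ U, ∀ i, y i p ≠ 0)
    (hflow : ∀ p ∈ U, ∀ i, deriv (x i) p = 2 * y i p / alFd g x i p)
    (hx1 : ∀ p ∈ U, ∀ i, x i p ≠ b 0)
    (hx2 : ∀ p ∈ U, ∀ i, x i p ≠ b 1)
    (hpsine : ∀ p ∈ U, alPsi g x y (b 0) p ≠ alPsi g x y (b 1) p)
 :
    ∀ p ∈ U,
      frakD g x y (b 0) (b 1) p
        = (frakA g x y (b 0) (b 1) p) ^ 2 + deriv (frakA g x y (b 0) (b 1)) p :=
  stmt10_general g b U hU x y hx hy hdist hy2 hyne hflow hpsine
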